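/- For every η ∈ ℝ, the function Q ↦ J(Q,η) is convex on the convex set { Q ∈ Sym₀(3) : v_min(Q) > −1/3, |Q|² > η and v_min(Q) > η }. -/

import Mathlib

/-
Common setting for the formalisation of
"An analysis of equilibria in dense nematic liquid crystals" (J. M. Taylor).

* `V3` is ℝ³ (as a Euclidean space), `sph` is the unit sphere S²,
  and `μS` is the 2-dimensional Hausdorff (surface) measure restricted to S².
* `IsProb f` says `f ∈ P(S²)`.
* `FE f η` is the free energy `F(f,η) ∈ ℝ ∪ {+∞}` (realised as `EReal`),
  with the conventions `0 ln 0 = 0`, `0 ⬝ (+∞) = 0` and `-ln x = +∞` for `x ≤ 0`: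
  the value is the real integral whenever the argument of the logarithm is a.e.
  positive on `{f ≠ 0}` and the integrand is integrable, and `+∞` otherwise.
-/

open MeasureTheory Matrix Filter
open scoped ENNReal Topology Classical

noncomputable section

abbrev V3 : Type := EuclideanSpace ℝ (Fin 3)

/-- The unit sphere S² in ℝ³. -/
def sph : Set V3 := Metric.sphere (0 : V3) 1

/-- The 2-dimensional Hausdorff (surface) measure on S². -/
def μS : Measure V3 := (μH[2]).restrict sph

abbrev Mat3 : Type := Matrix (Fin 3) (Fin 3) ℝ

/-- Membership in Sym₀(3): real symmetric traceless 3×3 matrices. -/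
def Sym0 (Q : Mat3) : Prop := Q.IsSymm ∧ Q.trace = 0

/-- The Frobenius inner product `A·B = trace (A*B)` (on symmetric matrices). -/
def mdot (A B : Mat3) : ℝ := (A * B).trace

/-- The quadratic form `p ↦ Qp·p`. -/
def qf (Q : Mat3) (p : V3) : ℝ := ∑ i, ∑ j, Q i j * p i * p j

/-- The smallest eigenvalue of a symmetric matrix, via Rayleigh quotients on S². -/
def vmin (Q : Mat3) : ℝ := ⨅ p : sph, qf Q (p : V3)

/-- `f ∈ P(S²)`. -/
def IsProb (f : V3 → ℝ) : Prop :=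
  Integrable f μS ∧ (∀ᵐ p ∂μS, 0 ≤ f p) ∧ ∫ p, f p ∂μS = 1

/-- The interaction term `p ↦ ∫_{S²} ((p·q)² − 1/3) f(q) dq`. -/
def Kf (f : V3 → ℝ) (p : V3) : ℝ :=
  ∫ q, ((∑ i, p i * q i) ^ 2 - 1 / 3) * f q ∂μS

/-- The free energy `F(f,η) ∈ ℝ ∪ {+∞}`. -/
def FE (f : V3 → ℝ) (η : ℝ) : EReal :=
  if (∀ᵐ p ∂μS, f p ≠ 0 → η < Kf f p) ∧
      Integrable (fun p => f p * Real.log (f p) - f p * Real.log (Kf f p - η)) μS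
  then ((∫ p, f p * Real.log (f p) - f p * Real.log (Kf f p - η) ∂μS : ℝ) : EReal)
  else ⊤

/-- The Q-tensor `Q(f) = ∫_{S²} (p⊗p − (1/3)I) f(p) dp`. -/
def Qten (f : V3 → ℝ) : Mat3 :=
  Matrix.of fun i j => ∫ p, f p * (p i * p j - if i = j then (1 : ℝ) / 3 else 0) ∂μS

/-- The macroscopic energy `J(Q,η) = inf_{f ∈ A(Q)} F(f,η)` (`= +∞` when `A(Q) = ∅`). -/
def Jfun (Q : Mat3) (η : ℝ) : EReal :=
  sInf {y : EReal | ∃ f : V3 → ℝ, IsProb f ∧ Qten f = Q ∧ FE f η = y}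

/-- The dual objective `D(Q,λ,η) = λ·Q − ln ∫_{S²} exp(λp·p) max(Qp·p − η, 0) dp`. -/
def Dob (Q lam : Mat3) (η : ℝ) : ℝ :=
  mdot lam Q - Real.log (∫ p, Real.exp (qf lam p) * max (qf Q p - η) 0 ∂μS)

/-- The effective domain of `J(·,η)`. -/
def domJ (η : ℝ) : Set Mat3 :=
  {Q : Mat3 | Sym0 Q ∧ -(1/3) < vmin Q ∧ η < mdot Q Q}

/-- The matrix `∫_{S²} (f(p)/(Qp·p − η)) (p⊗p − (1/3)I) dp` (integrand `0` where `f` vanishes,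
by the junk-value conventions of division in Lean). -/
def Mmat (f : V3 → ℝ) (Q : Mat3) (η : ℝ) : Mat3 :=
  Matrix.of fun i j =>
    ∫ p, f p / (qf Q p - η) * (p i * p j - if i = j then (1 : ℝ) / 3 else 0) ∂μS

/-- The entropy `∫_{S²} f ln f ∈ ℝ ∪ {+∞}`. -/
def EntE (f : V3 → ℝ) : EReal :=
  if Integrable (fun p => f p * Real.log (f p)) μS
  then ((∫ p, f p * Real.log (f p) ∂μS : ℝ) : EReal)
  else ⊤

/-- The Ball–Majumdar singular potential `ψ_s(Q) = inf_{f ∈ A(Q)} ∫ f ln f`. -/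
def psiS (Q : Mat3) : EReal :=
  sInf {y : EReal | ∃ f : V3 → ℝ, IsProb f ∧ Qten f = Q ∧ EntE f = y}

/-- `f` is an `L^p`-local minimiser of `F(·,η)`. -/
def LpLocMin (pp : ℝ≥0∞) (η : ℝ) (f : V3 → ℝ) : Prop :=
  FE f η < ⊤ ∧ ∃ ε : ℝ, 0 < ε ∧ ∀ g : V3 → ℝ, IsProb g →
    eLpNorm (g - f) pp μS < ENNReal.ofReal ε → FE f η ≤ FE g η

/-!
For `f ∈ A(Q)` the interaction term is `Kf f p = Qp·p` on S², so the integrand of `F(f,η)` is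
`(x, y) ↦ x ln x − x ln y`, the perspective `y φ(x/y)` of `φ(t) = t ln t`, evaluated at
`(f(p), Qp·p − η)`. Mixing `f = a f₁ + b f₂` mixes both arguments affinely and gives
`Q(f) = a Q₁ + b Q₂`, so joint convexity of the perspective yields
`F(f,η) ≤ a F(f₁,η) + b F(f₂,η)`; taking infima gives the convexity of `J(·,η)`.
The condition `v_min(Q) > η` keeps `Qp·p − η` positive, and together with the finiteness of
the surface measure of S² (a Lipschitz image of a square) it bounds the integrand from below,
so that `J(Q,η) > −∞`. The domain is convex because `v_min` is concave, and `|Q|² > η` is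
implied there since a traceless `Q` has `v_min(Q) ≤ 0`.
-/

lemma mul_log_sub_mul_log_eq_perspective {x y : ℝ} (hx : 0 ≤ x) (hy : 0 < y) :
    x * Real.log x - x * Real.log y = y * (x / y * Real.log (x / y)) := by
  rcases hx.eq_or_lt with rfl | hx
  · simp
  rw [Real.log_div hx.ne' hy.ne']
  field_simp

lemma sub_le_mul_log_sub_mul_log {x y : ℝ} (hx : 0 ≤ x) (hy : 0 < y) :
    x - y ≤ x * Real.log x - x * Real.log y := by
  rw [mul_log_sub_mul_log_eq_perspective hx hy]
  calc x - y = y * (x / y - 1) := by field_simp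
    _ ≤ y * (x / y * Real.log (x / y)) :=
      mul_le_mul_of_nonneg_left (Real.self_sub_one_le_mul_log (by positivity)) hy.le

lemma convexOn_mul_log_sub_mul_log :
    ConvexOn ℝ (Set.Ici 0 ×ˢ Set.Ioi 0)
      fun z : ℝ × ℝ => z.1 * Real.log z.1 - z.1 * Real.log z.2 := by
  refine ⟨(convex_Ici 0).prod (convex_Ioi 0), ?_⟩
  rintro ⟨x₁, y₁⟩ ⟨hx₁, hy₁⟩ ⟨x₂, y₂⟩ ⟨hx₂, hy₂⟩ a b ha hb hab
  simp only [Set.mem_Ici, Set.mem_Ioi] at hx₁ hy₁ hx₂ hy₂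
  simp only [Prod.smul_mk, Prod.mk_add_mk, smul_eq_mul]
  have hy : 0 < a * y₁ + b * y₂ := by
    rcases ha.eq_or_lt with rfl | ha
    · simp_all
    · positivity
  set y := a * y₁ + b * y₂
  have key := Real.convexOn_mul_log.2 (Set.mem_Ici.2 (div_nonneg hx₁ hy₁.le))
    (Set.mem_Ici.2 (div_nonneg hx₂ hy₂.le)) (by positivity : 0 ≤ a * y₁ / y)
    (by positivity : 0 ≤ b * y₂ / y) (by field_simp; rfl)
  have hmix : a * y₁ / y * (x₁ / y₁) + b * y₂ / y * (x₂ / y₂) = (a * x₁ + b * x₂) / y := by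
    field_simp
  simp only [smul_eq_mul, hmix] at key
  rw [mul_log_sub_mul_log_eq_perspective (by positivity) hy,
    mul_log_sub_mul_log_eq_perspective hx₁ hy₁, mul_log_sub_mul_log_eq_perspective hx₂ hy₂]
  calc y * ((a * x₁ + b * x₂) / y * Real.log ((a * x₁ + b * x₂) / y))
      ≤ y * (a * y₁ / y * (x₁ / y₁ * Real.log (x₁ / y₁))
        + b * y₂ / y * (x₂ / y₂ * Real.log (x₂ / y₂))) := mul_le_mul_of_nonneg_left key hy.le
    _ = _ := by field_simp

lemma EReal.coe_mul_ne_bot {a : ℝ} (ha : 0 < a) {x : EReal} (hx : x ≠ ⊥) : (a : EReal) * x ≠ ⊥ :=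
  (EReal.mul_ne_bot _ _).2 ⟨.inl (EReal.coe_ne_bot a), .inr hx, .inl (EReal.coe_ne_top a),
    .inl (EReal.coe_nonneg.2 ha.le)⟩

lemma EReal.exists_coe_mem_lt_of_sInf_lt {S : Set EReal} (hS : sInf S ≠ ⊥) {z : EReal}
    (hz : sInf S < z) : ∃ s : ℝ, (s : EReal) ∈ S ∧ (s : EReal) < z := by
  obtain ⟨y, hyS, hyz⟩ := sInf_lt_iff.1 hz
  lift y to ℝ using ⟨hyz.ne_top, ne_bot_of_le_ne_bot hS (sInf_le hyS)⟩
  exact ⟨y, hyS, hyz⟩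

lemma EReal.le_mul_sInf_add_mul_sInf {S₁ S₂ : Set EReal} {x : EReal} {a b : ℝ} (ha : 0 < a)
    (hb : 0 < b) (hab : a + b = 1) (h₁ : sInf S₁ ≠ ⊥) (h₂ : sInf S₂ ≠ ⊥)
    (h : ∀ s₁ s₂ : ℝ, (s₁ : EReal) ∈ S₁ → (s₂ : EReal) ∈ S₂ → x ≤ ((a * s₁ + b * s₂ : ℝ) : EReal)) :
    x ≤ a * sInf S₁ + b * sInf S₂ := by
  refine EReal.le_of_forall_lt_iff_le.1 fun z hz => ?_
  have hfin₁ : sInf S₁ ≠ ⊤ := by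
    rintro hT
    rw [hT, EReal.coe_mul_top_of_pos ha, EReal.top_add_of_ne_bot (EReal.coe_mul_ne_bot hb h₂)] at hz
    exact not_top_lt hz
  have hfin₂ : sInf S₂ ≠ ⊤ := by
    rintro hT
    rw [hT, EReal.coe_mul_top_of_pos hb, EReal.add_top_of_ne_bot (EReal.coe_mul_ne_bot ha h₁)] at hz
    exact not_top_lt hz
  lift sInf S₁ to ℝ using ⟨hfin₁, h₁⟩ with r₁ hr₁
  lift sInf S₂ to ℝ using ⟨hfin₂, h₂⟩ with r₂ hr₂
  norm_cast at hz
  set ε := z - (a * r₁ + b * r₂)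
  obtain ⟨s₁, hs₁, hlt₁⟩ := EReal.exists_coe_mem_lt_of_sInf_lt (hr₁ ▸ h₁)
    (show sInf S₁ < ((r₁ + ε : ℝ) : EReal) by rw [← hr₁]; exact_mod_cast (by linarith))
  obtain ⟨s₂, hs₂, hlt₂⟩ := EReal.exists_coe_mem_lt_of_sInf_lt (hr₂ ▸ h₂)
    (show sInf S₂ < ((r₂ + ε : ℝ) : EReal) by rw [← hr₂]; exact_mod_cast (by linarith))
  norm_cast at hlt₁ hlt₂
  refine (h s₁ s₂ hs₁ hs₂).trans (EReal.coe_le_coe_iff.2 ?_)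
  nlinarith

lemma sum_sq_eq_one_of_mem_sph {p : V3} (hp : p ∈ sph) : ∑ i, p i ^ 2 = 1 := by
  have h : ‖p‖ ^ 2 = 1 := by simp [show ‖p‖ = 1 by simpa [sph] using hp]
  simpa [EuclideanSpace.norm_sq_eq] using h

lemma single_one_mem_sph (k : Fin 3) : EuclideanSpace.single k (1 : ℝ) ∈ sph := by
  simp [sph]

instance : Nonempty sph := ⟨⟨_, single_one_mem_sph 0⟩⟩

lemma ae_mem_sph : ∀ᵐ p ∂μS, p ∈ sph :=
  ae_restrict_mem Metric.isClosed_sphere.measurableSet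

def sphCoord (w : Fin 2 → ℝ) : V3 :=
  !₂[Real.cos (w 0) * Real.cos (w 1), Real.cos (w 0) * Real.sin (w 1), Real.sin (w 0)]

lemma contDiff_sphCoord : ContDiff ℝ 1 sphCoord := by
  refine contDiff_piLp' (p := 2) fun i => ?_
  fin_cases i <;> simp [sphCoord] <;> fun_prop

lemma sph_subset_image_sphCoord : sph ⊆ sphCoord '' Metric.closedBall 0 Real.pi := by
  intro p hp
  have hsum := sum_sq_eq_one_of_mem_sph hp
  rw [Fin.sum_univ_three] at hsum
  set w : ℂ := ⟨p 0, p 1⟩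
  have hz : |p 2| ≤ 1 := abs_le_one_iff_mul_self_le_one.2 (by nlinarith)
  have hcos : Real.cos (Real.arcsin (p 2)) = ‖w‖ := by
    rw [Real.cos_arcsin, Complex.norm_def, Complex.normSq_mk]
    congr 1; linarith
  refine ⟨![Real.arcsin (p 2), Complex.arg w], ?_, ?_⟩
  · rw [Metric.mem_closedBall, dist_zero_right, pi_norm_le_iff_of_nonneg Real.pi_pos.le]
    intro i
    fin_cases i
    · simpa using (abs_le.2 ⟨Real.neg_pi_div_two_le_arcsin _, Real.arcsin_le_pi_div_two _⟩).trans
        (by linarith [Real.pi_pos])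
    · simpa using Complex.abs_arg_le_pi w
  · ext i
    fin_cases i
    · simp [sphCoord, hcos, Complex.norm_mul_cos_arg, w]
    · simp [sphCoord, hcos, Complex.norm_mul_sin_arg, w]
    · simp [sphCoord, Real.sin_arcsin (abs_le.1 hz).1 (abs_le.1 hz).2]

instance : IsFiniteMeasure μS := by
  refine ⟨?_⟩
  rw [μS, Measure.restrict_apply_univ]
  obtain ⟨K, hK⟩ := contDiff_sphCoord.locallyLipschitz.locallyLipschitzOn
    |>.exists_lipschitzOnWith_of_compact (isCompact_closedBall (0 : Fin 2 → ℝ) Real.pi)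
  have hball : μH[2] (Metric.closedBall (0 : Fin 2 → ℝ) Real.pi) < ⊤ := by
    have h := hausdorffMeasure_pi_real (ι := Fin 2)
    rw [Fintype.card_fin, Nat.cast_ofNat] at h
    rw [h]
    exact (isCompact_closedBall _ _).measure_lt_top
  calc μH[2] sph ≤ μH[2] (sphCoord '' Metric.closedBall 0 Real.pi) :=
        measure_mono sph_subset_image_sphCoord
    _ ≤ K ^ (2 : ℝ) * μH[2] (Metric.closedBall (0 : Fin 2 → ℝ) Real.pi) :=
        hK.hausdorffMeasure_image_le zero_le_two
    _ < ⊤ := ENNReal.mul_lt_top (by simp) hball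

lemma MeasureTheory.Integrable.mul_continuous_μS {f g : V3 → ℝ} (hf : Integrable f μS)
    (hg : Continuous g) :
    Integrable (fun p => f p * g p) μS :=
  IntegrableOn.mul_continuousOn hf hg.continuousOn (isCompact_sphere 0 1)

lemma continuous_qf (Q : Mat3) : Continuous (qf Q) := by
  unfold qf
  fun_prop

lemma exists_qf_le (Q : Mat3) : ∃ C, ∀ p ∈ sph, qf Q p ≤ C := by
  obtain ⟨C, hC⟩ := (isCompact_sphere (0 : V3) 1).bddAbove_image (continuous_qf Q).continuousOn
  exact ⟨C, fun p hp => hC ⟨p, hp, rfl⟩⟩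

lemma vmin_le_qf (Q : Mat3) {p : V3} (hp : p ∈ sph) : vmin Q ≤ qf Q p := by
  have hbdd : BddBelow (Set.range fun p : sph => qf Q p) := by
    rw [← Set.image_eq_range]
    exact (isCompact_sphere 0 1).bddBelow_image (continuous_qf Q).continuousOn
  exact ciInf_le hbdd (⟨p, hp⟩ : sph)

lemma qf_single_one (Q : Mat3) (k : Fin 3) : qf Q (EuclideanSpace.single k 1) = Q k k := by
  fin_cases k <;> simp [qf]

lemma three_mul_vmin_le_trace (Q : Mat3) : 3 * vmin Q ≤ Q.trace := by
  have h (k : Fin 3) : vmin Q ≤ Q k k := by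
    rw [← qf_single_one Q k]
    exact vmin_le_qf Q (single_one_mem_sph k)
  simp only [Matrix.trace, Fin.sum_univ_three, Matrix.diag_apply]
  linarith [h 0, h 1, h 2]

lemma qf_smul_add_smul (a b : ℝ) (Q₁ Q₂ : Mat3) (p : V3) :
    qf (a • Q₁ + b • Q₂) p = a * qf Q₁ p + b * qf Q₂ p := by
  simp only [qf, Matrix.add_apply, Matrix.smul_apply, smul_eq_mul, Finset.mul_sum,
    ← Finset.sum_add_distrib]
  congr! 2
  ring

lemma concaveOn_vmin : ConcaveOn ℝ Set.univ vmin := by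
  refine ⟨convex_univ, fun Q₁ _ Q₂ _ a b ha hb _ => le_ciInf fun p => ?_⟩
  rw [smul_eq_mul, smul_eq_mul, qf_smul_add_smul]
  have := vmin_le_qf Q₁ p.2
  have := vmin_le_qf Q₂ p.2
  nlinarith

lemma lt_vmin_smul_add_smul {c : ℝ} {Q₁ Q₂ : Mat3} (h₁ : c < vmin Q₁) (h₂ : c < vmin Q₂)
    {a b : ℝ} (ha : 0 ≤ a) (hb : 0 ≤ b) (hab : a + b = 1) : c < vmin (a • Q₁ + b • Q₂) :=
  (convex_Ioi c h₁ h₂ ha hb hab).trans_le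
    (concaveOn_vmin.2 (Set.mem_univ Q₁) (Set.mem_univ Q₂) ha hb hab)

lemma Sym0.smul_add_smul {Q₁ Q₂ : Mat3} (h₁ : Sym0 Q₁) (h₂ : Sym0 Q₂) (a b : ℝ) :
    Sym0 (a • Q₁ + b • Q₂) :=
  ⟨(h₁.1.smul a).add (h₂.1.smul b), by simp [Matrix.trace_add, Matrix.trace_smul, h₁.2, h₂.2]⟩

lemma mdot_self_nonneg {Q : Mat3} (h : Q.IsSymm) : 0 ≤ mdot Q Q := by
  simp only [mdot, Matrix.trace, Matrix.diag_apply, Matrix.mul_apply]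
  refine Finset.sum_nonneg fun i _ => Finset.sum_nonneg fun j _ => ?_
  rw [← h.apply i j]
  exact mul_self_nonneg _

lemma convex_Jfun_domain (η : ℝ) :
    Convex ℝ {Q : Mat3 | Sym0 Q ∧ -(1/3) < vmin Q ∧ η < mdot Q Q ∧ η < vmin Q} := by
  rintro Q₁ ⟨hs₁, hm₁, -, hv₁⟩ Q₂ ⟨hs₂, hm₂, -, hv₂⟩ a b ha hb hab
  have hs := hs₁.smul_add_smul hs₂ a b
  have hv := lt_vmin_smul_add_smul hv₁ hv₂ ha hb hab
  have hη : η < mdot (a • Q₁ + b • Q₂) (a • Q₁ + b • Q₂) := by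
    linarith [three_mul_vmin_le_trace (a • Q₁ + b • Q₂), hs.2, mdot_self_nonneg hs.1]
  exact ⟨hs, lt_vmin_smul_add_smul hm₁ hm₂ ha hb hab, hη, hv⟩

lemma Qten_smul_add_smul {f₁ f₂ : V3 → ℝ} (hf₁ : Integrable f₁ μS) (hf₂ : Integrable f₂ μS)
    (a b : ℝ) : Qten (a • f₁ + b • f₂) = a • Qten f₁ + b • Qten f₂ := by
  ext i j
  have hg : Continuous fun p : V3 => p i * p j - if i = j then (1 : ℝ) / 3 else 0 := by fun_prop
  simp only [Qten, Matrix.add_apply, Matrix.smul_apply, Matrix.of_apply, Pi.add_apply,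
    Pi.smul_apply, smul_eq_mul, add_mul, mul_assoc]
  rw [integral_add ((hf₁.mul_continuous_μS hg).const_mul a)
    ((hf₂.mul_continuous_μS hg).const_mul b), integral_const_mul, integral_const_mul]

lemma Kf_smul_add_smul {f₁ f₂ : V3 → ℝ} (hf₁ : Integrable f₁ μS) (hf₂ : Integrable f₂ μS)
    (a b : ℝ) (p : V3) : Kf (a • f₁ + b • f₂) p = a * Kf f₁ p + b * Kf f₂ p := by
  have hg : Continuous fun q : V3 => (∑ i, p i * q i) ^ 2 - 1 / 3 := by fun_prop
  simp only [Kf, Pi.add_apply, Pi.smul_apply, smul_eq_mul, mul_add, mul_left_comm _ a,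
    mul_left_comm _ b]
  rw [integral_add, integral_const_mul, integral_const_mul]
  · simpa [mul_comm] using (hf₁.mul_continuous_μS hg).const_mul a
  · simpa [mul_comm] using (hf₂.mul_continuous_μS hg).const_mul b

lemma Kf_eq_qf_Qten {f : V3 → ℝ} (hf : Integrable f μS) {p : V3} (hp : p ∈ sph) :
    Kf f p = qf (Qten f) p := by
  have hp1 := sum_sq_eq_one_of_mem_sph hp
  rw [Fin.sum_univ_three] at hp1
  have hint (i j : Fin 3) : Integrable (fun q : V3 =>
      f q * (q i * q j - if i = j then (1 : ℝ) / 3 else 0) * (p i * p j)) μS :=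
    (hf.mul_continuous_μS (by fun_prop)).mul_const _
  calc Kf f p = ∫ q, ∑ i, ∑ j,
        f q * (q i * q j - if i = j then (1 : ℝ) / 3 else 0) * (p i * p j) ∂μS := by
        refine integral_congr_ae (Eventually.of_forall fun q => ?_)
        simp only [Fin.sum_univ_three, Fin.isValue, Fin.reduceEq, if_true, if_false]
        linear_combination (f q / 3) * hp1
    _ = qf (Qten f) p := by
        rw [integral_finsetSum _ fun i _ => integrable_finsetSum _ fun j _ => hint i j]
        refine Finset.sum_congr rfl fun i _ => ?_
        rw [integral_finsetSum _ fun j _ => hint i j]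
        refine Finset.sum_congr rfl fun j _ => ?_
        rw [integral_mul_const, mul_assoc]
        rfl

lemma ae_lt_Kf {f : V3 → ℝ} (hf : Integrable f μS) {η : ℝ} (hv : η < vmin (Qten f)) :
    ∀ᵐ p ∂μS, η < Kf f p := by
  filter_upwards [ae_mem_sph] with p hp
  rw [Kf_eq_qf_Qten hf hp]
  exact hv.trans_le (vmin_le_qf _ hp)

lemma IsProb.smul_add_smul {f₁ f₂ : V3 → ℝ} (hf₁ : IsProb f₁) (hf₂ : IsProb f₂) {a b : ℝ}
    (ha : 0 ≤ a) (hb : 0 ≤ b) (hab : a + b = 1) : IsProb (a • f₁ + b • f₂) := by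
  refine ⟨(hf₁.1.smul a).add (hf₂.1.smul b), ?_, ?_⟩
  · filter_upwards [hf₁.2.1, hf₂.2.1] with p h₁ h₂
    simp only [Pi.add_apply, Pi.smul_apply, smul_eq_mul]
    positivity
  · simp only [Pi.add_apply, Pi.smul_apply, smul_eq_mul]
    rw [integral_add (hf₁.1.const_mul a) (hf₂.1.const_mul b), integral_const_mul,
      integral_const_mul, hf₁.2.2, hf₂.2.2, mul_one, mul_one, hab]

def feDensity (f : V3 → ℝ) (η : ℝ) (p : V3) : ℝ :=
  f p * Real.log (f p) - f p * Real.log (Kf f p - η)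

lemma FE_eq_integral {f : V3 → ℝ} {η : ℝ} (hpos : ∀ᵐ p ∂μS, η < Kf f p)
    (hint : Integrable (feDensity f η) μS) : FE f η = ((∫ p, feDensity f η p ∂μS : ℝ) : EReal) :=
  if_pos ⟨hpos.mono fun _ h _ => h, hint⟩

lemma FE_eq_coe {f : V3 → ℝ} {η s : ℝ} (h : FE f η = s) :
    Integrable (feDensity f η) μS ∧ ∫ p, feDensity f η p ∂μS = s := by
  unfold FE at h
  split_ifs at h with hc
  · exact ⟨hc.2, EReal.coe_injective h⟩
  · exact absurd h (EReal.top_ne_coe s)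

lemma aestronglyMeasurable_feDensity {f : V3 → ℝ} (hf : Integrable f μS) (η : ℝ) :
    AEStronglyMeasurable (feDensity f η) μS := by
  have hf' := hf.aemeasurable
  have hq : AEMeasurable (fun p => f p * Real.log (f p) - f p * Real.log (qf (Qten f) p - η)) μS :=
    (hf'.mul (Real.measurable_log.comp_aemeasurable hf')).sub
      (hf'.mul (Real.measurable_log.comp ((continuous_qf _).measurable.sub_const η)).aemeasurable)
  refine hq.aestronglyMeasurable.congr ?_
  filter_upwards [ae_mem_sph] with p hp
  rw [feDensity, Kf_eq_qf_Qten hf hp]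

lemma ae_le_feDensity {f : V3 → ℝ} (hf : IsProb f) {η C : ℝ} (hv : η < vmin (Qten f))
    (hC : ∀ p ∈ sph, qf (Qten f) p ≤ C) : ∀ᵐ p ∂μS, η - C ≤ feDensity f η p := by
  filter_upwards [ae_mem_sph, ae_lt_Kf hf.1 hv, hf.2.1] with p hp hη hf0
  have := sub_le_mul_log_sub_mul_log hf0 (sub_pos.2 hη)
  have := hC p hp
  rw [← Kf_eq_qf_Qten hf.1 hp] at this
  rw [feDensity]
  linarith

lemma Jfun_ne_bot {Q : Mat3} {η : ℝ} (hv : η < vmin Q) : Jfun Q η ≠ ⊥ := by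
  obtain ⟨C, hC⟩ := exists_qf_le Q
  refine ne_bot_of_le_ne_bot (EReal.coe_ne_bot ((η - C) * μS.real Set.univ)) (le_sInf ?_)
  rintro _ ⟨f, hf, rfl, rfl⟩
  unfold FE
  split_ifs with hc
  · rw [EReal.coe_le_coe_iff, mul_comm, ← smul_eq_mul, ← integral_const]
    exact integral_mono_ae (integrable_const _) hc.2 (ae_le_feDensity hf hv hC)
  · exact le_top

lemma FE_smul_add_smul_le {f₁ f₂ : V3 → ℝ} (hf₁ : IsProb f₁) (hf₂ : IsProb f₂) {η : ℝ}
    (hv₁ : η < vmin (Qten f₁)) (hv₂ : η < vmin (Qten f₂)) {a b s₁ s₂ : ℝ}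
    (ha : 0 ≤ a) (hb : 0 ≤ b) (hab : a + b = 1) (hs₁ : FE f₁ η = s₁) (hs₂ : FE f₂ η = s₂) :
    FE (a • f₁ + b • f₂) η ≤ ((a * s₁ + b * s₂ : ℝ) : EReal) := by
  obtain ⟨hI₁, rfl⟩ := FE_eq_coe hs₁
  obtain ⟨hI₂, rfl⟩ := FE_eq_coe hs₂
  set f := a • f₁ + b • f₂
  have hf : IsProb f := hf₁.smul_add_smul hf₂ ha hb hab
  have hv : η < vmin (Qten f) := by
    rw [Qten_smul_add_smul hf₁.1 hf₂.1]
    exact lt_vmin_smul_add_smul hv₁ hv₂ ha hb hab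
  have hK (p : V3) : Kf f p - η = a * (Kf f₁ p - η) + b * (Kf f₂ p - η) := by
    rw [Kf_smul_add_smul hf₁.1 hf₂.1]
    linear_combination η * hab
  have hle : ∀ᵐ p ∂μS, feDensity f η p ≤ a * feDensity f₁ η p + b * feDensity f₂ η p := by
    filter_upwards [ae_lt_Kf hf₁.1 hv₁, ae_lt_Kf hf₂.1 hv₂, hf₁.2.1, hf₂.2.1] with p h₁ h₂ h₃ h₄
    have := convexOn_mul_log_sub_mul_log.2 (x := (f₁ p, Kf f₁ p - η)) (y := (f₂ p, Kf f₂ p - η))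
      ⟨h₃, sub_pos.2 h₁⟩ ⟨h₄, sub_pos.2 h₂⟩ ha hb hab
    simpa [feDensity, hK, f] using this
  have hI := (hI₁.const_mul a).add (hI₂.const_mul b)
  obtain ⟨C, hC⟩ := exists_qf_le (Qten f)
  have hint : Integrable (feDensity f η) μS :=
    integrable_of_le_of_le (aestronglyMeasurable_feDensity hf.1 η) (ae_le_feDensity hf hv hC) hle
      (integrable_const _) hI
  rw [FE_eq_integral (ae_lt_Kf hf.1 hv) hint, EReal.coe_le_coe_iff, ← integral_const_mul,
    ← integral_const_mul, ← integral_add (hI₁.const_mul a) (hI₂.const_mul b)]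
  exact integral_mono_ae hint hI hle

/-- `J(·,η)` is convex on the convex set
`{Q ∈ Sym₀(3) : v_min(Q) > −1/3, |Q|² > η, v_min(Q) > η}`. -/
theorem stmt_8 (η : ℝ) :
    Convex ℝ {Q : Mat3 | Sym0 Q ∧ -(1/3) < vmin Q ∧ η < mdot Q Q ∧ η < vmin Q} ∧
    ∀ Q₁ Q₂ : Mat3,
      (Sym0 Q₁ ∧ -(1/3) < vmin Q₁ ∧ η < mdot Q₁ Q₁ ∧ η < vmin Q₁) →
      (Sym0 Q₂ ∧ -(1/3) < vmin Q₂ ∧ η < mdot Q₂ Q₂ ∧ η < vmin Q₂) →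
      ∀ a b : ℝ, 0 ≤ a → 0 ≤ b → a + b = 1 →
        Jfun (a • Q₁ + b • Q₂) η ≤ (a : EReal) * Jfun Q₁ η + (b : EReal) * Jfun Q₂ η := by
  refine ⟨convex_Jfun_domain η, ?_⟩
  rintro Q₁ Q₂ ⟨-, -, -, hv₁⟩ ⟨-, -, -, hv₂⟩ a b ha hb hab
  rcases ha.eq_or_lt with rfl | ha
  · obtain rfl : b = 1 := by linarith
    simp
  rcases hb.eq_or_lt with rfl | hb
  · obtain rfl : a = 1 := by linarith
    simp
  refine EReal.le_mul_sInf_add_mul_sInf ha hb hab (Jfun_ne_bot hv₁) (Jfun_ne_bot hv₂) ?_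
  rintro s₁ s₂ ⟨f₁, hf₁, rfl, hs₁⟩ ⟨f₂, hf₂, rfl, hs₂⟩
  refine sInf_le_of_le ⟨a • f₁ + b • f₂, hf₁.smul_add_smul hf₂ ha.le hb.le hab,
    Qten_smul_add_smul hf₁.1 hf₂.1 a b, rfl⟩ ?_
  exact FE_smul_add_smul_le hf₁ hf₂ hv₁ hv₂ ha.le hb.le hab hs₁ hs₂
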